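/- With the same setup, the Hausdorff-type separation D(M*, N*) = sup_{p ∈ M*} inf_{q ∈ N*} ‖p − q‖ satisfies max_k [D²(M_k, N_k) + ∑_{j≠k} δ²(M_j, N_j)] ≤ D²(M*, N*) ≤ ∑_{j=1}^J Δ²(M_j, N_j), assuming M* projects onto each M_k, N* ⊆ N_1 × ... × N_J, and all sets are compact. -/

import Mathlib

/-!
In the ℓ² product, `‖p - q‖² = ∑ⱼ ‖pⱼ - qⱼ‖²`. Bounding every term by `Δ²(Mⱼ, Nⱼ)` gives the upper
bound. For the lower bound pick `p ∈ M*` whose `k`-th block realises `D(Mₖ, Nₖ)`: against any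
`q ∈ N*` the `k`-th term is at least `D²(Mₖ, Nₖ)` and every other term at least `δ²(Mⱼ, Nⱼ)`, so
the same holds for `inf_q ‖p - q‖²`, which `D²(M*, N*)` dominates.
-/

/-- Minimum separation distance between two sets. -/
noncomputable def minSep {α : Type*} [PseudoMetricSpace α] (A B : Set α) : ℝ :=
  sInf (Set.image2 dist A B)

/-- Maximum separation distance between two sets. -/
noncomputable def maxSep {α : Type*} [PseudoMetricSpace α] (A B : Set α) : ℝ :=
  sSup (Set.image2 dist A B)

/-- One-sided Hausdorff separation distance from A to B. -/
noncomputable def hausSep {α : Type*} [PseudoMetricSpace α] (A B : Set α) : ℝ :=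
  sSup ((fun a => Metric.infDist a B) '' A)

section SetSeparation

variable {α : Type*} [PseudoMetricSpace α] {A B : Set α} {a b : α}

lemma minSep_nonneg : 0 ≤ minSep A B :=
  Real.sInf_nonneg (Set.forall_mem_image2.2 fun _ _ _ _ => dist_nonneg)

lemma minSep_le_dist (ha : a ∈ A) (hb : b ∈ B) : minSep A B ≤ dist a b :=
  csInf_le ⟨0, Set.forall_mem_image2.2 fun _ _ _ _ => dist_nonneg⟩ (Set.mem_image2_of_mem ha hb)

lemma dist_le_maxSep (hA : IsCompact A) (hB : IsCompact B) (ha : a ∈ A) (hb : b ∈ B) :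
    dist a b ≤ maxSep A B := by
  refine le_csSup ?_ (Set.mem_image2_of_mem ha hb)
  rw [← Set.image_prod]
  exact ((hA.prod hB).image continuous_dist).bddAbove

lemma hausSep_nonneg : 0 ≤ hausSep A B :=
  Real.sSup_nonneg (Set.forall_mem_image.2 fun _ _ => Metric.infDist_nonneg)

end SetSeparation

namespace PiLp

variable {ι : Type*} [Fintype ι] {β : ι → Type*} [∀ i, SeminormedAddCommGroup (β i)]
  {M N : ∀ i, Set (β i)} {Q : Set (PiLp 2 β)} {p : PiLp 2 β}

lemma infDist_le_sqrt_sum_maxSep_sq (hM : ∀ i, IsCompact (M i)) (hN : ∀ i, IsCompact (N i))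
    (hp : ∀ i, p i ∈ M i) (hQ : ∀ q ∈ Q, ∀ i, q i ∈ N i) :
    Metric.infDist p Q ≤ √(∑ i, maxSep (M i) (N i) ^ 2) := by
  rcases Q.eq_empty_or_nonempty with rfl | ⟨q, hq⟩
  · simp [Real.sqrt_nonneg]
  calc Metric.infDist p Q ≤ dist p q := Metric.infDist_le_dist_of_mem hq
    _ = √(∑ i, dist (p i) (q i) ^ 2) := dist_eq_of_L2 p q
    _ ≤ _ := by
      gcongr with i
      exact dist_le_maxSep (hM i) (hN i) (hp i) (hQ q hq i)

lemma sq_infDist_add_sum_minSep_sq_le [DecidableEq ι] (k : ι) (hp : ∀ i, p i ∈ M i)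
    (hQ : ∀ q ∈ Q, ∀ i, q i ∈ N i) (hQne : Q.Nonempty) :
    Metric.infDist (p k) (N k) ^ 2 + ∑ i ∈ Finset.univ.erase k, minSep (M i) (N i) ^ 2 ≤
      Metric.infDist p Q ^ 2 := by
  rw [← Real.sqrt_le_left Metric.infDist_nonneg, Metric.le_infDist hQne]
  intro q hq
  rw [dist_eq_of_L2, ← Finset.add_sum_erase _ _ (Finset.mem_univ k)]
  gcongr with i
  · exact Metric.infDist_nonneg
  · exact Metric.infDist_le_dist_of_mem (hQ q hq k)
  · exact minSep_nonneg
  · exact minSep_le_dist (hp i) (hQ q hq i)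

end PiLp

theorem joint_hausdorff_separation_bounds_general {J n : ℕ}
    (M N : Fin J → Set (EuclideanSpace ℝ (Fin n)))
    (Ms Ns : Set (PiLp 2 (fun _ : Fin J => EuclideanSpace ℝ (Fin n))))
    (hNs : Ns.Nonempty)
    (hMsub : ∀ p ∈ Ms, ∀ j, p j ∈ M j) (hNsub : ∀ q ∈ Ns, ∀ j, q j ∈ N j)
    (hMjc : ∀ j, IsCompact (M j)) (hNjc : ∀ j, IsCompact (N j))
    (hach : ∀ k : Fin J, ∃ m ∈ M k, Metric.infDist m (N k) = hausSep (M k) (N k))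
    (hlift : ∀ k : Fin J, ∀ m ∈ M k,
      Metric.infDist m (N k) = hausSep (M k) (N k) → ∃ p ∈ Ms, p k = m) :
    (∀ k : Fin J, (hausSep (M k) (N k)) ^ 2 +
        ∑ j ∈ Finset.univ.erase k, (minSep (M j) (N j)) ^ 2 ≤ (hausSep Ms Ns) ^ 2) ∧
      (hausSep Ms Ns) ^ 2 ≤ ∑ j, (maxSep (M j) (N j)) ^ 2 := by
  have hinfDist_le : ∀ p ∈ Ms, Metric.infDist p Ns ≤ √(∑ j, maxSep (M j) (N j) ^ 2) :=
    fun p hp => PiLp.infDist_le_sqrt_sum_maxSep_sq hMjc hNjc (hMsub p hp) hNsub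
  refine ⟨fun k => ?_, ?_⟩
  · obtain ⟨m, hm, hmax⟩ := hach k
    obtain ⟨p, hp, rfl⟩ := hlift k m hm hmax
    calc _ ≤ Metric.infDist p Ns ^ 2 :=
          hmax ▸ PiLp.sq_infDist_add_sum_minSep_sq_le k (hMsub p hp) hNsub hNs
      _ ≤ hausSep Ms Ns ^ 2 := by
          gcongr
          · exact Metric.infDist_nonneg
          · exact le_csSup ⟨_, Set.forall_mem_image.2 hinfDist_le⟩ ⟨p, hp, rfl⟩
  · rw [← Real.le_sqrt hausSep_nonneg (by positivity)]
    exact Real.sSup_le (Set.forall_mem_image.2 hinfDist_le) (Real.sqrt_nonneg _)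

theorem joint_hausdorff_separation_bounds {J n : ℕ}
    (M N : Fin J → Set (EuclideanSpace ℝ (Fin n)))
    (Ms Ns : Set (PiLp 2 (fun _ : Fin J => EuclideanSpace ℝ (Fin n))))
    (hMs : Ms.Nonempty) (hNs : Ns.Nonempty)
    (hMsub : ∀ p ∈ Ms, ∀ j, p j ∈ M j) (hNsub : ∀ q ∈ Ns, ∀ j, q j ∈ N j)
    (hMc : IsCompact Ms) (hNc : IsCompact Ns)
    (hMjc : ∀ j, IsCompact (M j)) (hNjc : ∀ j, IsCompact (N j))
    (hMjne : ∀ j, (M j).Nonempty) (hNjne : ∀ j, (N j).Nonempty)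
    (hach : ∀ k : Fin J, ∃ m ∈ M k, Metric.infDist m (N k) = hausSep (M k) (N k))
    (hlift : ∀ k : Fin J, ∀ m ∈ M k,
      Metric.infDist m (N k) = hausSep (M k) (N k) → ∃ p ∈ Ms, p k = m) :
    (∀ k : Fin J, (hausSep (M k) (N k)) ^ 2 +
        ∑ j ∈ Finset.univ.erase k, (minSep (M j) (N j)) ^ 2 ≤ (hausSep Ms Ns) ^ 2) ∧
      (hausSep Ms Ns) ^ 2 ≤ ∑ j, (maxSep (M j) (N j)) ^ 2 :=
  joint_hausdorff_separation_bounds_general M N Ms Ns hNs hMsub hNsub hMjc hNjc hach hlift
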